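/- arXiv:1203.2430 — 2 statements merged into one kernel-verified Lean document; each statement's English description precedes it below -/
import Mathlib

section
/- Given a network G with duplication forest Γ, the extension number e(θ) = Σ_i e(v_i) is the same for every duplicate sequence θ compatible with Γ, where e(v_i) is the number of common neighbors of v_i and its anchor u_i in G_i^θ. -/
open scoped Classical

universe u

variable {V : Type u}

/-- The merge (backward) operator `R_v^u(G)`: contract duplicate `v` into anchor `u`.
Vertex `v` becomes isolated (representing its removal from the vertex set). -/
def mergeG (G : SimpleGraph V) (u v : V) : SimpleGraph V where
  Adj x y := x ≠ y ∧ x ≠ v ∧ y ≠ v ∧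
    (G.Adj x y ∨ (x = u ∧ G.Adj v y) ∨ (y = u ∧ G.Adj v x))
  symm := by
    constructor
    rintro x y ⟨h1, h2, h3, h4⟩
    refine ⟨h1.symm, h3, h2, ?_⟩
    rcases h4 with h | ⟨a, b⟩ | ⟨a, b⟩
    · exact Or.inl h.symm
    · exact Or.inr (Or.inr ⟨a, b⟩)
    · exact Or.inr (Or.inl ⟨a, b⟩)
  loopless := by constructor; rintro x ⟨h, _⟩; exact h rfl

/-- δ(v): 1 if the duplicate `v` is adjacent to its anchor `u`. -/
noncomputable def deltaI (G : SimpleGraph V) (u v : V) : ℕ :=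
  if G.Adj u v then 1 else 0

/-- e(v): number of common neighbours of anchor `u` and duplicate `v`. -/
noncomputable def extI [Fintype V] (G : SimpleGraph V) (u v : V) : ℕ :=
  (G.neighborFinset u ∩ G.neighborFinset v).card

/-- ℓ(v): number of vertices (other than `u`, `v`) adjacent to exactly one of `u`, `v`. -/
noncomputable def lossI [Fintype V] (G : SimpleGraph V) (u v : V) : ℕ :=
  (((G.neighborFinset u ∪ G.neighborFinset v) \
      (G.neighborFinset u ∩ G.neighborFinset v)) \ {u, v}).card

/-- Apply the merge operators backward along a list of (anchor, duplicate) pairs. -/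
noncomputable def graphAfter (G : SimpleGraph V) (steps : List (V × V)) : SimpleGraph V :=
  steps.foldl (fun g p => mergeG g p.1 p.2) G

noncomputable def deltaNum : SimpleGraph V → List (V × V) → ℕ
  | _, [] => 0
  | G, s :: rest => deltaI G s.1 s.2 + deltaNum (mergeG G s.1 s.2) rest

noncomputable def extNum [Fintype V] : SimpleGraph V → List (V × V) → ℕ
  | _, [] => 0
  | G, s :: rest => extI G s.1 s.2 + extNum (mergeG G s.1 s.2) rest

noncomputable def lossNum [Fintype V] : SimpleGraph V → List (V × V) → ℕ
  | _, [] => 0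
  | G, s :: rest => lossI G s.1 s.2 + lossNum (mergeG G s.1 s.2) rest

/-- The likelihood of a (backward) history: product of one-step DMC transition
probabilities `p_c^{δ_i} p^{e_i} q^{ℓ_i}` with `q = (1-p)/2`. -/
noncomputable def likelihood [Fintype V] (pc p : ℝ) : SimpleGraph V → List (V × V) → ℝ
  | _, [] => 1
  | G, s :: rest =>
      pc ^ deltaI G s.1 s.2 * p ^ extI G s.1 s.2 * ((1 - p) / 2) ^ lossI G s.1 s.2 *
        likelihood pc p (mergeG G s.1 s.2) rest

/-- Rooted binary trees. -/
inductive BTree (V : Type u) : Type u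
  | leaf : V → BTree V
  | node : BTree V → BTree V → BTree V

def BTree.leaves : BTree V → List V
  | .leaf v => [v]
  | .node l r => l.leaves ++ r.leaves

/-- A duplication forest: a list of rooted binary trees. -/
abbrev Forest (V : Type u) := List (BTree V)

def Forest.leaves (Γ : Forest V) : List V := Γ.flatMap BTree.leaves

/-- Replace the cherry `{u, v}` of a tree by the single leaf `u`. -/
inductive ReplaceCherry : BTree V → V → V → BTree V → Prop
  | base_left (u v : V) : ReplaceCherry (.node (.leaf u) (.leaf v)) u v (.leaf u)
  | base_right (u v : V) : ReplaceCherry (.node (.leaf v) (.leaf u)) u v (.leaf u)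
  | left {l l' r : BTree V} {u v : V} :
      ReplaceCherry l u v l' → ReplaceCherry (.node l r) u v (.node l' r)
  | right {l r r' : BTree V} {u v : V} :
      ReplaceCherry r u v r' → ReplaceCherry (.node l r) u v (.node l r')

/-- One backward step on a duplication forest: replace the cherry `{u,v}` in one tree. -/
inductive ForestStep : Forest V → V → V → Forest V → Prop
  | head {t t' : BTree V} {ts : Forest V} {u v : V} :
      ReplaceCherry t u v t' → ForestStep (t :: ts) u v (t' :: ts)
  | tail {t : BTree V} {ts ts' : Forest V} {u v : V} :
      ForestStep ts u v ts' → ForestStep (t :: ts) u v (t :: ts')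

/-- `FUnfold Γ steps Γ₀`: the (anchor, duplicate) list `steps`, processed backward in time,
is compatible with the duplication forest `Γ` and reduces it to `Γ₀`. -/
inductive FUnfold : Forest V → List (V × V) → Forest V → Prop
  | nil (Γ : Forest V) : FUnfold Γ [] Γ
  | cons {Γ Γ' Γ₀ : Forest V} {u v : V} {steps : List (V × V)} :
      ForestStep Γ u v Γ' → FUnfold Γ' steps Γ₀ → FUnfold Γ ((u, v) :: steps) Γ₀

/-- A forest consisting only of isolated leaves (duplication forest of a seed graph). -/
def IsSeed (Γ : Forest V) : Prop := ∀ t ∈ Γ, ∃ v, t = BTree.leaf v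

/-!
Attach to every vertex `x` its block `c x`, the set of vertices of `G` already merged into `x`.
Along a backward history the current graph is then the block graph of `G`: two live vertices are
adjacent iff some edge of `G` joins their blocks. When blocks `A` and `B` merge, a third block is
adjacent to `A ∪ B` iff it is adjacent to `A` or to `B`, so the number of adjacent pairs of blocks
drops by exactly `[A ~ B] + e(v)`. Summing along `θ`, `e(θ)` is the number of adjacent pairs of
singleton blocks minus the `potential` of `Γ`: the number of internal nodes of `Γ` whose two
subtrees span adjacent blocks, plus the number of pairs of trees whose blocks are adjacent. Both
only depend on `G` and `Γ`.
-/

theorem List.countP_or_add_countP_and {α : Type*} (p q : α → Prop) [DecidablePred p]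
    [DecidablePred q] (l : List α) :
    l.countP (fun a => p a ∨ q a) + l.countP (fun a => p a ∧ q a) =
      l.countP (fun a => p a) + l.countP (fun a => q a) := by
  induction l with
  | nil => rfl
  | cons a l ih =>
    simp only [List.countP_cons]
    by_cases hp : p a <;> by_cases hq : q a <;>
      simp only [hp, hq, decide_true, decide_false, or_true, or_false, and_true, and_false,
        if_true] <;> omega

def BlockAdj (G : SimpleGraph V) (A B : Finset V) : Prop := ∃ a ∈ A, ∃ b ∈ B, G.Adj a b

namespace BlockAdj

variable {G : SimpleGraph V} {A B C : Finset V}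

theorem symm : BlockAdj G A B → BlockAdj G B A := by
  rintro ⟨a, ha, b, hb, hab⟩
  exact ⟨b, hb, a, ha, hab.symm⟩

theorem comm : BlockAdj G A B ↔ BlockAdj G B A := ⟨symm, symm⟩

theorem union_left : BlockAdj G (A ∪ B) C ↔ BlockAdj G A C ∨ BlockAdj G B C := by
  simp only [BlockAdj, Finset.mem_union, or_and_right, exists_or]

theorem singleton {x y : V} : BlockAdj G {x} {y} ↔ G.Adj x y := by
  simp [BlockAdj]

end BlockAdj

/-- Vertices outside `L` are isolated, like a duplicate after `mergeG`. -/
def blockGraph (G : SimpleGraph V) (c : V → Finset V) (L : List V) : SimpleGraph V where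
  Adj x y := x ∈ L ∧ y ∈ L ∧ x ≠ y ∧ BlockAdj G (c x) (c y)
  symm := ⟨fun _ _ h => ⟨h.2.1, h.1, h.2.2.1.symm, h.2.2.2.symm⟩⟩
  loopless := ⟨fun _ h => h.2.2.1 rfl⟩

@[simp]
theorem blockGraph_adj {G : SimpleGraph V} {c : V → Finset V} {L : List V} {x y : V} :
    (blockGraph G c L).Adj x y ↔ x ∈ L ∧ y ∈ L ∧ x ≠ y ∧ BlockAdj G (c x) (c y) :=
  Iff.rfl

theorem blockGraph_singleton {G : SimpleGraph V} {L : List V} (hL : ∀ x, x ∈ L) :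
    blockGraph G (fun x => {x}) L = G := by
  ext x y
  simp only [blockGraph, BlockAdj.singleton, hL, true_and]
  exact ⟨fun h => h.2, fun h => ⟨h.ne, h⟩⟩

theorem blockGraph_perm (G : SimpleGraph V) (c : V → Finset V) {L L' : List V} (h : L.Perm L') :
    blockGraph G c L = blockGraph G c L' := by
  ext x y
  simp only [blockGraph, h.mem_iff]

theorem mergeG_blockGraph (G : SimpleGraph V) (c : V → Finset V) {u v : V} {R : List V}
    (hnd : (u :: v :: R).Nodup) :
    mergeG (blockGraph G c (u :: v :: R)) u v =
      blockGraph G (Function.update c u (c u ∪ c v)) (u :: R) := by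
  simp only [List.nodup_cons, List.mem_cons, not_or] at hnd
  obtain ⟨⟨huv, huR⟩, hvR, -⟩ := hnd
  ext x y
  simp only [mergeG, blockGraph, List.mem_cons, Function.update_apply]
  grind [BlockAdj.comm, BlockAdj.union_left]

noncomputable def countAdjPairs (G : SimpleGraph V) : List (Finset V) → ℕ
  | [] => 0
  | A :: l => l.countP (fun B => BlockAdj G A B) + countAdjPairs G l

theorem countAdjPairs_perm (G : SimpleGraph V) {l l' : List (Finset V)} (h : l.Perm l') :
    countAdjPairs G l = countAdjPairs G l' := by
  induction h with
  | nil => rfl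
  | cons A h ih => simp only [countAdjPairs, h.countP_eq, ih]
  | swap A B l =>
    simp only [countAdjPairs, List.countP_cons, decide_eq_true_eq, BlockAdj.comm (A := A)]
    omega
  | trans _ _ ih₁ ih₂ => exact ih₁.trans ih₂

theorem countAdjPairs_cons_cons (G : SimpleGraph V) (A B : Finset V) (l : List (Finset V)) :
    countAdjPairs G (A :: B :: l) = (if BlockAdj G A B then 1 else 0) +
      l.countP (fun C => BlockAdj G A C ∧ BlockAdj G B C) + countAdjPairs G ((A ∪ B) :: l) := by
  have hsplit := l.countP_or_add_countP_and (BlockAdj G A ·) (BlockAdj G B ·)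
  simp only [countAdjPairs, List.countP_cons, BlockAdj.union_left, decide_eq_true_eq]
  omega

theorem countAdjPairs_map_update (G : SimpleGraph V) (c : V → Finset V) {u v : V} {R : List V}
    (huR : u ∉ R) :
    countAdjPairs G ((u :: v :: R).map c) = (if BlockAdj G (c u) (c v) then 1 else 0) +
      R.countP (fun w => BlockAdj G (c u) (c w) ∧ BlockAdj G (c v) (c w)) +
      countAdjPairs G ((u :: R).map (Function.update c u (c u ∪ c v))) := by
  have hR : R.map (Function.update c u (c u ∪ c v)) = R.map c :=
    List.map_congr_left fun w hw => Function.update_of_ne (ne_of_mem_of_not_mem hw huR) _ _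
  simp only [List.map_cons, Function.update_self, hR, countAdjPairs_cons_cons, List.countP_map,
    Function.comp_def]

theorem extI_blockGraph [Fintype V] (G : SimpleGraph V) (c : V → Finset V) {u v : V}
    {R : List V} (hnd : (u :: v :: R).Nodup) :
    extI (blockGraph G c (u :: v :: R)) u v =
      R.countP (fun w => BlockAdj G (c u) (c w) ∧ BlockAdj G (c v) (c w)) := by
  simp only [List.nodup_cons, List.mem_cons, not_or] at hnd
  obtain ⟨⟨huv, huR⟩, hvR, hR⟩ := hnd
  rw [extI, ← hR.card_eq_countP]
  congr 1
  ext w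
  simp only [Finset.mem_inter, SimpleGraph.mem_neighborFinset, blockGraph_adj, Finset.mem_filter,
    List.mem_toFinset, List.mem_cons]
  grind

namespace BTree

noncomputable def block (c : V → Finset V) : BTree V → Finset V
  | leaf v => c v
  | node l r => l.block c ∪ r.block c

noncomputable def countAdjNodes (G : SimpleGraph V) (c : V → Finset V) : BTree V → ℕ
  | leaf _ => 0
  | node l r => (if BlockAdj G (l.block c) (r.block c) then 1 else 0) +
      l.countAdjNodes G c + r.countAdjNodes G c

variable {c : V → Finset V} {u : V} {A : Finset V} {t : BTree V}

theorem block_update_of_notMem (hu : u ∉ t.leaves) :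
    t.block (Function.update c u A) = t.block c := by
  induction t with
  | leaf w => exact Function.update_of_ne (by simpa [leaves, eq_comm] using hu) _ _
  | node l r ihl ihr =>
    simp only [leaves, List.mem_append, not_or] at hu
    simp only [block, ihl hu.1, ihr hu.2]

theorem countAdjNodes_update_of_notMem (G : SimpleGraph V) (hu : u ∉ t.leaves) :
    t.countAdjNodes G (Function.update c u A) = t.countAdjNodes G c := by
  induction t with
  | leaf w => rfl
  | node l r ihl ihr =>
    simp only [leaves, List.mem_append, not_or] at hu
    simp only [countAdjNodes, block_update_of_notMem hu.1, block_update_of_notMem hu.2, ihl hu.1,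
      ihr hu.2]

end BTree

namespace ReplaceCherry

variable {t t' : BTree V} {u v : V}

theorem exists_perm (h : ReplaceCherry t u v t') :
    ∃ R, t.leaves.Perm (u :: v :: R) ∧ t'.leaves.Perm (u :: R) := by
  induction h with
  | base_left u v => exact ⟨[], .rfl, .rfl⟩
  | base_right u v => exact ⟨[], .swap u v [], .rfl⟩
  | @left l l' r u v _ ih =>
    obtain ⟨R, hl, hl'⟩ := ih
    exact ⟨R ++ r.leaves, hl.append_right _, hl'.append_right _⟩
  | @right l r r' u v _ ih =>
    obtain ⟨R, hr, hr'⟩ := ih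
    refine ⟨l.leaves ++ R, ?_, ?_⟩
    · exact (hr.append_left _).trans (List.perm_middle.trans (.cons u List.perm_middle))
    · exact (hr'.append_left _).trans List.perm_middle

theorem mem_leaves (h : ReplaceCherry t u v t') : u ∈ t.leaves := by
  obtain ⟨R, hR, -⟩ := h.exists_perm
  exact hR.mem_iff.mpr List.mem_cons_self

theorem block_update (h : ReplaceCherry t u v t') (hnd : t.leaves.Nodup) (c : V → Finset V) :
    t'.block (Function.update c u (c u ∪ c v)) = t.block c := by
  induction h with
  | base_left u v => simp [BTree.block]
  | base_right u v => simp [BTree.block, Finset.union_comm]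
  | @left l l' r u v hl ih =>
    rw [BTree.leaves] at hnd
    have hur : u ∉ r.leaves := List.disjoint_of_nodup_append hnd hl.mem_leaves
    simp only [BTree.block, ih hnd.of_append_left, BTree.block_update_of_notMem hur]
  | @right l r r' u v hr ih =>
    rw [BTree.leaves] at hnd
    have hul : u ∉ l.leaves := fun hu => List.disjoint_of_nodup_append hnd hu hr.mem_leaves
    simp only [BTree.block, ih hnd.of_append_right, BTree.block_update_of_notMem hul]

theorem countAdjNodes_update (G : SimpleGraph V) (h : ReplaceCherry t u v t') (hnd : t.leaves.Nodup)
    (c : V → Finset V) :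
    t.countAdjNodes G c = (if BlockAdj G (c u) (c v) then 1 else 0) +
      t'.countAdjNodes G (Function.update c u (c u ∪ c v)) := by
  induction h with
  | base_left u v => rfl
  | base_right u v =>
    have hcomm : BlockAdj G (c v) (c u) ↔ BlockAdj G (c u) (c v) := BlockAdj.comm
    simp [BTree.countAdjNodes, BTree.block, hcomm]
  | @left l l' r u v hl ih =>
    rw [BTree.leaves] at hnd
    have hur : u ∉ r.leaves := List.disjoint_of_nodup_append hnd hl.mem_leaves
    simp only [BTree.countAdjNodes, ih hnd.of_append_left, hl.block_update hnd.of_append_left,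
      BTree.block_update_of_notMem hur, BTree.countAdjNodes_update_of_notMem G hur]
    omega
  | @right l r r' u v hr ih =>
    rw [BTree.leaves] at hnd
    have hul : u ∉ l.leaves := fun hu => List.disjoint_of_nodup_append hnd hu hr.mem_leaves
    simp only [BTree.countAdjNodes, ih hnd.of_append_right, hr.block_update hnd.of_append_right,
      BTree.block_update_of_notMem hul, BTree.countAdjNodes_update_of_notMem G hul]
    omega

end ReplaceCherry

namespace Forest

theorem leaves_cons (t : BTree V) (ts : Forest V) : leaves (t :: ts) = t.leaves ++ leaves ts :=
  List.flatMap_cons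

theorem leaves_map_leaf (L : List V) : leaves (L.map BTree.leaf) = L := by
  induction L with
  | nil => rfl
  | cons w L ih => rw [List.map_cons, leaves_cons, ih]; rfl

variable {c : V → Finset V} {u : V} {A : Finset V} {Γ : Forest V}

theorem map_block_update_of_notMem (hu : u ∉ leaves Γ) :
    Γ.map (BTree.block (Function.update c u A)) = Γ.map (BTree.block c) :=
  List.map_congr_left fun t ht =>
    BTree.block_update_of_notMem fun h => hu (List.mem_flatMap.mpr ⟨t, ht, h⟩)

theorem map_countAdjNodes_update_of_notMem (G : SimpleGraph V) (hu : u ∉ leaves Γ) :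
    Γ.map (BTree.countAdjNodes G (Function.update c u A)) = Γ.map (BTree.countAdjNodes G c) :=
  List.map_congr_left fun t ht =>
    BTree.countAdjNodes_update_of_notMem G fun h => hu (List.mem_flatMap.mpr ⟨t, ht, h⟩)

noncomputable def potential (G : SimpleGraph V) (c : V → Finset V) (Γ : Forest V) : ℕ :=
  (Γ.map (BTree.countAdjNodes G c)).sum + countAdjPairs G (Γ.map (BTree.block c))

end Forest

namespace ForestStep

variable {Γ Γ' : Forest V} {u v : V}

theorem exists_perm (h : ForestStep Γ u v Γ') :
    ∃ R, (Forest.leaves Γ).Perm (u :: v :: R) ∧ (Forest.leaves Γ').Perm (u :: R) := by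
  induction h with
  | @head t t' ts u v ht =>
    obtain ⟨R, hR, hR'⟩ := ht.exists_perm
    simp only [Forest.leaves_cons]
    exact ⟨R ++ Forest.leaves ts, hR.append_right _, hR'.append_right _⟩
  | @tail t ts ts' u v _ ih =>
    obtain ⟨R, hR, hR'⟩ := ih
    simp only [Forest.leaves_cons]
    refine ⟨t.leaves ++ R, ?_, ?_⟩
    · exact (hR.append_left _).trans (List.perm_middle.trans (.cons u List.perm_middle))
    · exact (hR'.append_left _).trans List.perm_middle

theorem mem_leaves (h : ForestStep Γ u v Γ') : u ∈ Forest.leaves Γ := by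
  obtain ⟨R, hR, -⟩ := h.exists_perm
  exact hR.mem_iff.mpr List.mem_cons_self

theorem map_block_update (h : ForestStep Γ u v Γ') (hnd : (Forest.leaves Γ).Nodup)
    (c : V → Finset V) :
    Γ'.map (BTree.block (Function.update c u (c u ∪ c v))) = Γ.map (BTree.block c) := by
  induction h with
  | @head t t' ts u v ht =>
    rw [Forest.leaves_cons] at hnd
    have hu : u ∉ Forest.leaves ts := List.disjoint_of_nodup_append hnd ht.mem_leaves
    simp only [List.map_cons, ht.block_update hnd.of_append_left,
      Forest.map_block_update_of_notMem hu]
  | @tail t ts ts' u v hts ih =>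
    rw [Forest.leaves_cons] at hnd
    have hu : u ∉ t.leaves := fun hu => List.disjoint_of_nodup_append hnd hu hts.mem_leaves
    simp only [List.map_cons, ih hnd.of_append_right, BTree.block_update_of_notMem hu]

theorem sum_countAdjNodes_update (G : SimpleGraph V) (h : ForestStep Γ u v Γ')
    (hnd : (Forest.leaves Γ).Nodup) (c : V → Finset V) :
    (Γ.map (BTree.countAdjNodes G c)).sum = (if BlockAdj G (c u) (c v) then 1 else 0) +
      (Γ'.map (BTree.countAdjNodes G (Function.update c u (c u ∪ c v)))).sum := by
  induction h with
  | @head t t' ts u v ht =>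
    rw [Forest.leaves_cons] at hnd
    have hu : u ∉ Forest.leaves ts := List.disjoint_of_nodup_append hnd ht.mem_leaves
    simp only [List.map_cons, List.sum_cons, ht.countAdjNodes_update G hnd.of_append_left c,
      Forest.map_countAdjNodes_update_of_notMem G hu]
    omega
  | @tail t ts ts' u v hts ih =>
    rw [Forest.leaves_cons] at hnd
    have hu : u ∉ t.leaves := fun hu => List.disjoint_of_nodup_append hnd hu hts.mem_leaves
    simp only [List.map_cons, List.sum_cons, ih hnd.of_append_right,
      BTree.countAdjNodes_update_of_notMem G hu]
    omega

theorem potential_update (G : SimpleGraph V) (h : ForestStep Γ u v Γ')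
    (hnd : (Forest.leaves Γ).Nodup) (c : V → Finset V) :
    Γ.potential G c = (if BlockAdj G (c u) (c v) then 1 else 0) +
      Γ'.potential G (Function.update c u (c u ∪ c v)) := by
  rw [Forest.potential, Forest.potential, h.sum_countAdjNodes_update G hnd c,
    h.map_block_update hnd c, add_assoc]

end ForestStep

theorem IsSeed.exists_eq_map_leaf {Γ : Forest V} (h : IsSeed Γ) :
    ∃ L : List V, Γ = L.map BTree.leaf := by
  induction Γ with
  | nil => exact ⟨[], rfl⟩
  | cons t ts ih =>
    obtain ⟨w, rfl⟩ := h t List.mem_cons_self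
    obtain ⟨L, rfl⟩ := ih fun s hs => h s (List.mem_cons_of_mem _ hs)
    exact ⟨w :: L, rfl⟩

theorem IsSeed.potential {Γ : Forest V} (h : IsSeed Γ) (G : SimpleGraph V) (c : V → Finset V) :
    Γ.potential G c = countAdjPairs G ((Forest.leaves Γ).map c) := by
  obtain ⟨L, rfl⟩ := h.exists_eq_map_leaf
  simp [Forest.potential, Forest.leaves_map_leaf, BTree.countAdjNodes, BTree.block,
    Function.comp_def]

theorem FUnfold.extNum_blockGraph_add_potential [Fintype V] (G : SimpleGraph V)
    {Γ Γ₀ : Forest V} {s : List (V × V)} (h : FUnfold Γ s Γ₀) (hseed : IsSeed Γ₀)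
    (c : V → Finset V) (hnd : (Forest.leaves Γ).Nodup) :
    extNum (blockGraph G c (Forest.leaves Γ)) s + Γ.potential G c =
      countAdjPairs G ((Forest.leaves Γ).map c) := by
  induction h generalizing c with
  | nil Γ => rw [extNum, hseed.potential, zero_add]
  | @cons Γ Γ' Γ₀ u v s hstep _ ih =>
    obtain ⟨R, hL, hL'⟩ := hstep.exists_perm
    have hnd₂ : (u :: v :: R).Nodup := hL.nodup_iff.mp hnd
    have hnd₁ : (u :: R).Nodup := hnd₂.sublist (.cons_cons u (List.sublist_cons_self v R))
    have hIH := ih hseed (Function.update c u (c u ∪ c v)) (hL'.nodup_iff.mpr hnd₁)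
    rw [blockGraph_perm G _ hL', countAdjPairs_perm G (hL'.map _)] at hIH
    rw [extNum, blockGraph_perm G c hL, countAdjPairs_perm G (hL.map c), extI_blockGraph G c hnd₂,
      mergeG_blockGraph G c hnd₂, hstep.potential_update G hnd c,
      countAdjPairs_map_update G c (List.nodup_cons.mp hnd₁).1, ← hIH]
    omega

/-- the extension number `e(θ)` is the same for every duplicate
sequence compatible with the duplication forest `Γ` of the network `G`. -/
theorem stmt7 [Fintype V] (G : SimpleGraph V) (Γ : Forest V)
    (hnd : (Forest.leaves Γ).Nodup) (hall : ∀ x : V, x ∈ Forest.leaves Γ)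
    (s₁ s₂ : List (V × V)) (Γ₁ Γ₂ : Forest V)
    (h₁ : FUnfold Γ s₁ Γ₁) (hseed₁ : IsSeed Γ₁)
    (h₂ : FUnfold Γ s₂ Γ₂) (hseed₂ : IsSeed Γ₂) :
    extNum G s₁ = extNum G s₂ := by
  have e₁ := h₁.extNum_blockGraph_add_potential G hseed₁ (fun x => {x}) hnd
  have e₂ := h₂.extNum_blockGraph_add_potential G hseed₂ (fun x => {x}) hnd
  rw [blockGraph_singleton hall] at e₁ e₂
  omega
end

section
/- (Swap lemma) Let G be a network with duplication forest Γ, and let θ₁ = (v₁,…,v_n) and θ₂ be two duplicate sequences compatible with Γ such that θ₂ is obtained from θ₁ by swapping positions m and m+1 (i.e., v'_m = v_{m+1}, v'_{m+1} = v_m, v'_i = v_i otherwise). Then G_i^{θ₁} = G_i^{θ₂} for every index i ∈ {0,…,n} with i ≠ m. -/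
open scoped Classical

universe u

variable {V : Type u}

/-! Merging `v'` into `u'` and then `v` into `u` gives the same graph as the opposite order
as soon as `v ≠ v'`, `u ≠ v'` and `u' ≠ v`: apart from the edge `v v'`, which both orders send to
`u u'`, the two merges act on disjoint data. Compatibility with the duplication forest supplies
these inequalities: a merged duplicate leaves the forest, whose leaves stay distinct, so it
cannot occur in a later step. Hence the two histories agree before the swapped pair trivially
and after it by commutativity. -/

lemma mergeG_adj {G : SimpleGraph V} {u v x y : V} :
    (mergeG G u v).Adj x y ↔ x ≠ y ∧ x ≠ v ∧ y ≠ v ∧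
      (G.Adj x y ∨ (x = u ∧ G.Adj v y) ∨ (y = u ∧ G.Adj v x)) := Iff.rfl

lemma mergeG_comm (G : SimpleGraph V) {u v u' v' : V}
    (hvv' : v ≠ v') (huv' : u ≠ v') (hu'v : u' ≠ v) :
    mergeG (mergeG G u' v') u v = mergeG (mergeG G u v) u' v' := by
  ext x y
  simp only [mergeG_adj]
  have := G.adj_comm v v'
  have hne : ∀ {a b}, G.Adj a b → a ≠ b := fun h => h.ne
  grind

lemma List.foldl_take_append_swap {α β : Type*} (f : β → α → β) (x : β) (a b : List α)
    (p q : α) (hpq : f (f (a.foldl f x) p) q = f (f (a.foldl f x) q) p) {j : ℕ}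
    (hj : j ≠ a.length + 1) :
    ((a ++ p :: q :: b).take j).foldl f x = ((a ++ q :: p :: b).take j).foldl f x := by
  rcases Nat.lt_or_ge a.length j with hlt | hle
  · obtain ⟨k, rfl⟩ : ∃ k, j = a.length + 2 + k := ⟨j - (a.length + 2), by omega⟩
    simp only [List.take_append, List.take_of_length_le (by omega : a.length ≤ a.length + 2 + k),
      show a.length + 2 + k - a.length = k + 2 by omega, List.take_succ_cons, List.foldl_append,
      List.foldl_cons, hpq]
  · simp [List.take_append, Nat.sub_eq_zero_of_le hle]

lemma ReplaceCherry.anchor_mem_leaves {t t' : BTree V} {u v : V} (h : ReplaceCherry t u v t') :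
    u ∈ t.leaves := by
  induction h with
  | base_left | base_right => simp [BTree.leaves]
  | left _ ih | right _ ih => simp [BTree.leaves, ih]

lemma ReplaceCherry.leaves_perm {t t' : BTree V} {u v : V} (h : ReplaceCherry t u v t') :
    t.leaves.Perm (v :: t'.leaves) := by
  induction h with
  | base_left u v => exact List.Perm.swap v u []
  | base_right => rfl
  | left _ ih => exact ih.append_right _
  | right _ ih => exact (ih.append_left _).trans List.perm_middle

lemma Forest.leaves_cons_s11 (t : BTree V) (ts : Forest V) :
    Forest.leaves (t :: ts) = t.leaves ++ Forest.leaves ts :=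
  List.flatMap_cons

lemma ForestStep.anchor_mem_leaves {Γ Γ' : Forest V} {u v : V} (h : ForestStep Γ u v Γ') :
    u ∈ Forest.leaves Γ := by
  induction h with
  | head h => simp [Forest.leaves_cons_s11, h.anchor_mem_leaves]
  | tail _ ih => simp [Forest.leaves_cons_s11, ih]

lemma ForestStep.leaves_perm {Γ Γ' : Forest V} {u v : V} (h : ForestStep Γ u v Γ') :
    (Forest.leaves Γ).Perm (v :: Forest.leaves Γ') := by
  induction h with
  | head h =>
    simpa only [Forest.leaves_cons_s11, List.cons_append] using h.leaves_perm.append_right _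
  | tail _ ih =>
    simpa only [Forest.leaves_cons_s11] using (ih.append_left _).trans List.perm_middle

lemma ForestStep.nodup_leaves {Γ Γ' : Forest V} {u v : V} (h : ForestStep Γ u v Γ')
    (hnd : (Forest.leaves Γ).Nodup) : v ∉ Forest.leaves Γ' ∧ (Forest.leaves Γ').Nodup :=
  List.nodup_cons.1 (h.leaves_perm.nodup hnd)

lemma FUnfold.nodup_leaves {Γ Γ₀ : Forest V} {steps : List (V × V)}
    (h : FUnfold Γ steps Γ₀) (hnd : (Forest.leaves Γ).Nodup) : (Forest.leaves Γ₀).Nodup := by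
  induction h with
  | nil => exact hnd
  | cons hs _ ih => exact ih (hs.nodup_leaves hnd).2

lemma FUnfold.exists_of_append {Γ Γ₀ : Forest V} {a rest : List (V × V)}
    (h : FUnfold Γ (a ++ rest) Γ₀) : ∃ Δ, FUnfold Γ a Δ ∧ FUnfold Δ rest Γ₀ := by
  induction a generalizing Γ with
  | nil => exact ⟨Γ, .nil Γ, h⟩
  | cons p a ih =>
    cases h with
    | cons hs hrest =>
      obtain ⟨Δ, hΓΔ, hΔ⟩ := ih hrest
      exact ⟨Δ, .cons hs hΓΔ, hΔ⟩

lemma FUnfold.exists_of_cons {Γ Γ₀ : Forest V} {u v : V} {steps : List (V × V)}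
    (h : FUnfold Γ ((u, v) :: steps) Γ₀) : ∃ Γ', ForestStep Γ u v Γ' ∧ FUnfold Γ' steps Γ₀ := by
  cases h with
  | cons hs h => exact ⟨_, hs, h⟩

lemma FUnfold.ne_of_append_cons_cons {Γ Γ₀ : Forest V} (hnd : (Forest.leaves Γ).Nodup)
    {a b : List (V × V)} {u v u' v' : V} (h : FUnfold Γ (a ++ (u, v) :: (u', v') :: b) Γ₀) :
    u' ≠ v ∧ v' ≠ v := by
  obtain ⟨Δ, hΓΔ, hΔ⟩ := h.exists_of_append
  obtain ⟨X, hΔX, hX⟩ := hΔ.exists_of_cons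
  obtain ⟨_, hXY, -⟩ := hX.exists_of_cons
  have hvX : v ∉ Forest.leaves X := (hΔX.nodup_leaves (hΓΔ.nodup_leaves hnd)).1
  exact ⟨fun e => hvX (e ▸ hXY.anchor_mem_leaves),
    fun e => hvX (e ▸ hXY.leaves_perm.mem_iff.2 List.mem_cons_self)⟩

theorem stmt11_general (G : SimpleGraph V) (Γ : Forest V)
    (hnd : (Forest.leaves Γ).Nodup)
    (a b : List (V × V)) (u v u' v' : V) (Γ₁ Γ₂ : Forest V)
    (h₁ : FUnfold Γ (a ++ (u', v') :: (u, v) :: b) Γ₁)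
    (h₂ : FUnfold Γ (a ++ (u, v) :: (u', v') :: b) Γ₂) :
    ∀ j : ℕ, j ≠ a.length + 1 →
      graphAfter G ((a ++ (u', v') :: (u, v) :: b).take j) =
        graphAfter G ((a ++ (u, v) :: (u', v') :: b).take j) := by
  obtain ⟨huv', hvv'⟩ := FUnfold.ne_of_append_cons_cons hnd h₁
  obtain ⟨hu'v, -⟩ := FUnfold.ne_of_append_cons_cons hnd h₂
  intro j hj
  exact List.foldl_take_append_swap _ G a b _ _ (mergeG_comm _ hvv' huv' hu'v) hj

/-- swap lemma: if two compatible duplicate sequences differ only by a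
swap of the two consecutive duplications at positions `m` and `m+1` (here the steps are
listed backward in time, so the swapped pair sits after the common prefix `a`), then
the graphs of the two histories agree at every index except `m` (i.e. after every
prefix of backward steps of length `≠ a.length + 1`). -/
theorem stmt11 [Fintype V] (G : SimpleGraph V) (Γ : Forest V)
    (hnd : (Forest.leaves Γ).Nodup) (hall : ∀ x : V, x ∈ Forest.leaves Γ)
    (a b : List (V × V)) (u v u' v' : V) (Γ₁ Γ₂ : Forest V)
    (h₁ : FUnfold Γ (a ++ (u', v') :: (u, v) :: b) Γ₁)
    (h₂ : FUnfold Γ (a ++ (u, v) :: (u', v') :: b) Γ₂) :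
    ∀ j : ℕ, j ≠ a.length + 1 →
      graphAfter G ((a ++ (u', v') :: (u, v) :: b).take j) =
        graphAfter G ((a ++ (u, v) :: (u', v') :: b).take j) :=
  stmt11_general G Γ hnd a b u v u' v' Γ₁ Γ₂ h₁ h₂
end
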